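/- Let H be a Hilbert space, G ⊆ H convex, J : G → ℝ satisfying the strong convexity bound J(g) - J(f₀) ≥ (μ/2)‖g - f₀‖² for a minimizer f₀ of J and all g ∈ G, where μ > 0. Let Jₙ : G → ℝ be convex with minimizer fₙ ∈ G, and let Δₙ(g) = (Jₙ(g) - Jₙ(f₀)) - (J(g) - J(f₀)). If ‖fₙ - f₀‖ > δ and there exists λ ∈ (0,1) with g := λfₙ + (1-λ)f₀ satisfying ‖g - f₀‖ = δ, then sup_{h : ‖h - f₀‖ ≤ δ} (-Δₙ(h)) ≥ (μ/2)δ². -/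
import Mathlib


/-- Localization step: if J satisfies the strong convexity bound around its
minimizer f₀, Jₙ is convex with minimizer fₙ, ‖fₙ - f₀‖ > δ, and the interpolant
g = λfₙ + (1-λ)f₀ satisfies ‖g - f₀‖ = δ, then on the δ-ball around f₀ the
fluctuation Δₙ(h) = (Jₙ(h) - Jₙ(f₀)) - (J(h) - J(f₀)) attains
-Δₙ(h) ≥ (μ/2)δ² for some h (so the supremum over the ball is at least (μ/2)δ²). -/
theorem stmt13 {H : Type*} [NormedAddCommGroup H] [InnerProductSpace ℝ H]
    (G : Set H) (hG : Convex ℝ G)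
    (J Jn : H → ℝ) (μ δ : ℝ) (hμ : 0 < μ)
    (f₀ fn : H) (hf₀ : f₀ ∈ G) (hfn : fn ∈ G)
    (hsc : ∀ g ∈ G, μ / 2 * ‖g - f₀‖ ^ 2 ≤ J g - J f₀)
    (hJn : ConvexOn ℝ G Jn)
    (hfnmin : ∀ g ∈ G, Jn fn ≤ Jn g)
    (hfar : δ < ‖fn - f₀‖)
    (l : ℝ) (hl0 : 0 < l) (hl1 : l < 1)
    (g : H) (hg : g = l • fn + (1 - l) • f₀) (hgδ : ‖g - f₀‖ = δ) :
    ∃ h ∈ G, ‖h - f₀‖ ≤ δ ∧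
      μ / 2 * δ ^ 2 ≤ -((Jn h - Jn f₀) - (J h - J f₀)) := by
  have hgG : g ∈ G := by
    rw [hg]; exact hG hfn hf₀ hl0.le (by linarith) (by ring)
  refine ⟨g, hgG, hgδ.le, ?_⟩
  have h1 : Jn g ≤ Jn f₀ := by
    have := hJn.2 hfn hf₀ hl0.le (by linarith : (0:ℝ) ≤ 1 - l) (by ring)
    rw [← hg] at this
    have hmin := hfnmin f₀ hf₀
    simp only [smul_eq_mul] at this
    nlinarith
  have h2 := hsc g hgG
  rw [hgδ] at h2
  linarith
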